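/- Cooley–Tukey factorization of the DFT: for N = m·q, the N-point discrete Fourier transform matrix factors as DFT_N = L ∘ (DFT_m ⊗ I_q) ∘ D ∘ (I_m ⊗ DFT_q), where L is a permutation matrix (the stride permutation) and D is the diagonal matrix of twiddle factors diag(ω^{t_k}) with ω = e^{2πi/N} and t_k = (k mod m)·⌊k/m⌋ for k = 0,…,N−1. -/

import Mathlib

open Matrix Complex

/-- The (unnormalized) `N`-point discrete Fourier transform matrix, with entries
`ω^{jk}`, `ω = exp(2πi/N)`. -/
noncomputable def dftMatrix (N : ℕ) : Matrix (Fin N) (Fin N) ℂ :=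
  fun j k => Complex.exp (2 * Real.pi * I / N) ^ ((j : ℕ) * (k : ℕ))

/-!
Write a row index as `r = q·a + b` and a column index as `c = m·u + v` (`a, v < m`, `b, u < q`).
The stride permutation sends row `r` to the intermediate index `a + m·b`, and from there each
Kronecker factor is block-sparse, so every entry of `L * B * D * C` is a single product
`(ω^q)^{a·v} · ω^{v·b} · (ω^m)^{b·u}`, using `e^{2πi/m} = ω^q` and `e^{2πi/q} = ω^m`.
Since `r·c = q·a·v + v·b + m·b·u + mq·a·u` and `ω^{mq} = 1`, this is `ω^{r·c}`.
-/

theorem Nat.add_mul_lt_mul_of_lt {j l m q : ℕ} (hj : j < m) (hl : l < q) :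
    j + m * l < m * q :=
  calc j + m * l < m * (l + 1) := by rw [Nat.mul_succ]; omega
    _ ≤ m * q := Nat.mul_le_mul_left m hl

theorem Nat.eq_add_mul_iff {k j l m : ℕ} (hj : j < m) :
    k = j + m * l ↔ k % m = j ∧ k / m = l := by
  rw [and_comm, Nat.div_mod_unique (by omega)]
  simp [hj, eq_comm]

theorem Complex.exp_two_pi_mul_I_div_mul_pow (m : ℕ) {q : ℕ} (hq : q ≠ 0) :
    exp (2 * Real.pi * I / (m * q : ℕ)) ^ q = exp (2 * Real.pi * I / m) := by
  rw [← exp_nat_mul]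
  congr 1
  push_cast
  have : (q : ℂ) ≠ 0 := by exact_mod_cast hq
  field_simp

theorem Nat.mul_modEq_cooleyTukey (m q r c : ℕ) :
    r * c ≡ q * (r / q * (c % m)) + c % m * (r % q) + m * (r % q * (c / m)) [MOD m * q] := by
  have hr := Nat.div_add_mod r q
  have hc := Nat.div_add_mod c m
  have : r * c = q * (r / q * (c % m)) + c % m * (r % q) + m * (r % q * (c / m))
      + (m * q) * (r / q * (c / m)) := by
    conv_lhs => rw [← hr, ← hc]
    ring
  rw [Nat.ModEq, this, Nat.add_mul_mod_self_left]

namespace CooleyTukey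

variable (m q : ℕ)

def strideMatrix : Matrix (Fin (m * q)) (Fin (m * q)) ℂ :=
  fun r c => if (r : ℕ) = (c : ℕ) / m + q * ((c : ℕ) % m) then 1 else 0

noncomputable def dftKronId : Matrix (Fin (m * q)) (Fin (m * q)) ℂ :=
  fun r c => (if (r : ℕ) / m = (c : ℕ) / m then 1 else 0) *
    exp (2 * Real.pi * I / m) ^ (((r : ℕ) % m) * ((c : ℕ) % m))

noncomputable def twiddleMatrix : Matrix (Fin (m * q)) (Fin (m * q)) ℂ :=
  diagonal fun k => exp (2 * Real.pi * I / (m * q : ℕ)) ^ (((k : ℕ) % m) * ((k : ℕ) / m))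

noncomputable def idKronDft : Matrix (Fin (m * q)) (Fin (m * q)) ℂ :=
  fun r c => (if (r : ℕ) % m = (c : ℕ) % m then 1 else 0) *
    exp (2 * Real.pi * I / q) ^ (((r : ℕ) / m) * ((c : ℕ) / m))

variable {m q}

theorem strideMatrix_apply {r s : Fin (m * q)} (hs : (s : ℕ) = r / q + m * (r % q))
    (k : Fin (m * q)) : strideMatrix m q r k = if k = s then 1 else 0 := by
  have hrq : (r : ℕ) / q < m := Nat.div_lt_of_lt_mul (mul_comm m q ▸ r.isLt)
  have hkm : (k : ℕ) / m < q := Nat.div_lt_of_lt_mul k.isLt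
  refine if_congr ?_ rfl rfl
  rw [Fin.ext_iff, hs, Nat.eq_add_mul_iff hkm, Nat.eq_add_mul_iff hrq]
  tauto

theorem strideMatrix_mul_apply {r s : Fin (m * q)} (hs : (s : ℕ) = r / q + m * (r % q))
    (M : Matrix (Fin (m * q)) (Fin (m * q)) ℂ) (c : Fin (m * q)) :
    (strideMatrix m q * M) r c = M s c := by
  simp [mul_apply, strideMatrix_apply hs]

theorem dftKronId_mul_twiddleMatrix_mul_idKronDft_apply {j l : ℕ} {s : Fin (m * q)}
    (hj : j < m) (hs : (s : ℕ) = j + m * l) (c : Fin (m * q)) :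
    (dftKronId m q * twiddleMatrix m q * idKronDft m q) s c =
      exp (2 * Real.pi * I / m) ^ (j * (c % m)) *
      exp (2 * Real.pi * I / (m * q : ℕ)) ^ (c % m * l) *
      exp (2 * Real.pi * I / q) ^ (l * (c / m)) := by
  obtain ⟨hsm, hsl⟩ := (Nat.eq_add_mul_iff hj).1 hs
  have hcm : (c : ℕ) % m < m := Nat.mod_lt c (by omega)
  let k₀ : Fin (m * q) :=
    ⟨c % m + m * l, Nat.add_mul_lt_mul_of_lt hcm (hsl ▸ Nat.div_lt_of_lt_mul s.isLt)⟩
  obtain ⟨hkm, hkl⟩ := (Nat.eq_add_mul_iff (k := k₀) hcm).1 rfl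
  have hsupp : ∀ k, k ≠ k₀ →
      (dftKronId m q * twiddleMatrix m q) s k * idKronDft m q k c = 0 := by
    intro k hk
    simp only [twiddleMatrix, mul_diagonal, dftKronId, idKronDft]
    by_cases hblock : (s : ℕ) / m = k / m
    · have hdiag : ¬ (k : ℕ) % m = c % m := fun h =>
        hk (Fin.ext ((Nat.eq_add_mul_iff hcm).2 ⟨h, hsl ▸ hblock.symm⟩))
      simp [hdiag]
    · simp [hblock]
  rw [mul_apply, Fintype.sum_eq_single k₀ hsupp]
  simp [twiddleMatrix, mul_diagonal, dftKronId, idKronDft, hsm, hsl, hkm, hkl]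

end CooleyTukey

open CooleyTukey in
/-- Cooley–Tukey factorization of the DFT: for `N = m·q`,
`DFT_N = L * (DFT_m ⊗ I_q) * D * (I_m ⊗ DFT_q)`, where (under the identification of the
index `k` with the pair `(k mod m, k div m)`, i.e. `k = j + m·l` with `0 ≤ j < m`,
`0 ≤ l < q`):
* `L` is the stride permutation matrix sending index `j + m·l` to `l + q·j`,
* `DFT_m ⊗ I_q` and `I_m ⊗ DFT_q` are the Kronecker products written entrywise,
* `D = diag(ω^{t_k})` with `ω = exp(2πi/N)` and `t_k = (k mod m)·⌊k/m⌋`. -/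
theorem dft_cooley_tukey (m q : ℕ) (hm : 0 < m) (hq : 0 < q) :
    let N := m * q
    let ω : ℂ := Complex.exp (2 * Real.pi * I / N)
    -- stride permutation: `(L x)_{l + q·j} = x_{j + m·l}`
    let L : Matrix (Fin N) (Fin N) ℂ :=
      fun r c => if (r : ℕ) = (c : ℕ) / m + q * ((c : ℕ) % m) then 1 else 0
    -- `DFT_m ⊗ I_q` under the identification `k ↔ (k mod m, k div m)`
    let B : Matrix (Fin N) (Fin N) ℂ :=
      fun r c => (if (r : ℕ) / m = (c : ℕ) / m then 1 else 0) *
        Complex.exp (2 * Real.pi * I / m) ^ (((r : ℕ) % m) * ((c : ℕ) % m))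
    -- twiddle factors `D = diag(ω^{(k mod m)·⌊k/m⌋})`
    let D : Matrix (Fin N) (Fin N) ℂ :=
      Matrix.diagonal (fun k => ω ^ (((k : ℕ) % m) * ((k : ℕ) / m)))
    -- `I_m ⊗ DFT_q` under the identification `k ↔ (k mod m, k div m)`
    let C : Matrix (Fin N) (Fin N) ℂ :=
      fun r c => (if (r : ℕ) % m = (c : ℕ) % m then 1 else 0) *
        Complex.exp (2 * Real.pi * I / q) ^ (((r : ℕ) / m) * ((c : ℕ) / m))
    dftMatrix N = L * B * D * C := by
  intro N ω L B D C
  change dftMatrix (m * q) =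
    strideMatrix m q * dftKronId m q * twiddleMatrix m q * idKronDft m q
  have hω : ω ^ (m * q) = 1 := (isPrimitiveRoot_exp (m * q) (Nat.mul_pos hm hq).ne').pow_eq_one
  have hζm : exp (2 * Real.pi * I / m) = ω ^ q := (exp_two_pi_mul_I_div_mul_pow m hq.ne').symm
  have hζq : exp (2 * Real.pi * I / q) = ω ^ m := by
    simp only [ω, N, Nat.mul_comm m q, exp_two_pi_mul_I_div_mul_pow q hm.ne']
  ext r c
  have hrq : (r : ℕ) / q < m := Nat.div_lt_of_lt_mul (mul_comm m q ▸ r.isLt)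
  let s : Fin (m * q) := ⟨r / q + m * (r % q), Nat.add_mul_lt_mul_of_lt hrq (Nat.mod_lt r hq)⟩
  rw [mul_assoc, mul_assoc, strideMatrix_mul_apply (s := s) rfl, ← mul_assoc,
    dftKronId_mul_twiddleMatrix_mul_idKronDft_apply hrq rfl, hζm, hζq,
    ← pow_mul, ← pow_mul, ← pow_add, ← pow_add]
  exact pow_eq_pow_of_modEq (Nat.mul_modEq_cooleyTukey m q r c) hω
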